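/- arXiv:2103.09811 — 3 statements merged into one kernel-verified Lean document; each statement's English description precedes it below -/
import Mathlib

section
/- Let P be a simple polygon with triangulation T and dual tree D. If a token h occupies triangle t₁ and another token p occupies triangle t_k, and h moves along the unique dual path t₁, t₂, …, t_k toward p, while p may move within P but each crossing of a triangulation diagonal by p is recorded, then the set of triangles reachable by p without meeting h strictly decreases each time h advances a triangle; consequently h and p must eventually lie in a common triangle. -/
open SimpleGraph

private lemma getVert_one_mem_support' {V : Type*} {G : SimpleGraph V} {a b : V}
    (w : G.Walk a b) : w.getVert 1 ∈ w.support := by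
  cases w with
  | nil => simp [Walk.getVert]
  | cons h p =>
      rw [Walk.getVert_cons_succ, Walk.getVert_zero]
      simp

/-- Separation: if `w` is a path from `a` to `b` with `a ≠ b`, then any walk from
`b` avoiding `w.getVert 1` also avoids `a`. -/
private lemma sep' {V : Type*} [DecidableEq V] {G : SimpleGraph V} (hG : G.IsTree)
    {a b : V} (w : G.Walk a b) (hw : w.IsPath) {v : V} (u : G.Walk b v)
    (hx : w.getVert 1 ∉ u.support) : a ∉ u.support := by
  intro ha
  set u' := u.takeUntil a ha with hu'
  have hx' : w.getVert 1 ∉ u'.support :=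
    fun h => hx (Walk.support_takeUntil_subset u ha h)
  have hp : (u'.reverse.toPath : G.Walk a b).IsPath := (u'.reverse.toPath).2
  have heq : w = (u'.reverse.toPath : G.Walk a b) :=
    ((hG.existsUnique_path a b).unique hw hp)
  have : w.getVert 1 ∈ (u'.reverse.toPath : G.Walk a b).support := by
    rw [← heq]; exact getVert_one_mem_support' w
  have : w.getVert 1 ∈ u'.reverse.support := Walk.support_toPath_subset _ this
  rw [Walk.support_reverse, List.mem_reverse] at this
  exact hx' this

/-- Combinatorial abstraction of the interior-pursuit strategy
(Theorem 1 of the paper) to the dual tree of a triangulation of a simple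
polygon.  The searcher `h` (one token per triangle, i.e. per vertex of the dual
tree `G`) repeatedly moves one step along the unique dual path toward the
target `p`, while the target may move arbitrarily within its connected component
of `G` minus the searcher's vertex.  Then the set `R n` of vertices (triangles)
reachable by the target without meeting the searcher strictly decreases each
time the searcher advances, and consequently the searcher and the target must
eventually occupy a common vertex (triangle). -/
theorem stmt_8 {V : Type*} [Fintype V] [DecidableEq V] (G : SimpleGraph V)
    (hG : G.IsTree) (s q : ℕ → V)
    (hsearch : ∀ n : ℕ, s n ≠ q n →
      ∃ w : G.Walk (s n) (q n), w.IsPath ∧ s (n + 1) = w.getVert 1)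
    (hstay : ∀ n : ℕ, s n = q n → s (n + 1) = s n)
    (htarget : ∀ n : ℕ, q (n + 1) = q n ∨
      ∃ w : G.Walk (q n) (q (n + 1)), s (n + 1) ∉ w.support)
    (R : ℕ → Set V)
    (hR : ∀ n : ℕ, R n = {v : V | ∃ w : G.Walk (q n) v, s n ∉ w.support}) :
    (∀ n : ℕ, s n ≠ q n → s (n + 1) ≠ q (n + 1) → R (n + 1) ⊂ R n) ∧
    ∃ n : ℕ, s n = q n := by
  classical
  have key : ∀ n : ℕ, s n ≠ q n → s (n + 1) ≠ q (n + 1) → R (n + 1) ⊂ R n := by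
    intro n hne hne'
    obtain ⟨w, hw, hs1⟩ := hsearch n hne
    -- inclusion
    have hsub : R (n + 1) ⊆ R n := by
      intro v hv
      rw [hR] at hv
      obtain ⟨u, hu⟩ := hv
      rw [hR]
      rcases htarget n with hq | ⟨t, ht⟩
      · refine ⟨u.copy hq rfl, ?_⟩
        have : s (n + 1) ∉ (u.copy hq rfl).support := by
          rwa [Walk.support_copy]
        rw [hs1] at this
        exact sep' hG w hw _ this
      · refine ⟨t.append u, ?_⟩
        have : s (n + 1) ∉ (t.append u).support := by
          rw [Walk.mem_support_append_iff]
          push_neg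
          exact ⟨ht, hu⟩
        rw [hs1] at this
        exact sep' hG w hw _ this
    -- strictness: s (n+1) ∈ R n \ R (n+1)
    have hx_ne : s (n + 1) ≠ s n := by
      have hlen : 0 < w.length := by
        rcases Nat.eq_zero_or_pos w.length with h0 | h0
        · exact absurd (Walk.eq_of_length_eq_zero h0) hne
        · exact h0
      have hadj : G.Adj (w.getVert 0) (w.getVert 1) := w.adj_getVert_succ hlen
      rw [Walk.getVert_zero] at hadj
      rw [hs1]
      exact hadj.ne'
    have hxin : s (n + 1) ∈ R n := by
      rw [hR]
      set p := w.reverse with hp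
      have hpp : p.IsPath := hw.reverse
      have hmem : s (n + 1) ∈ p.support := by
        rw [hp, Walk.support_reverse, List.mem_reverse, hs1]
        exact getVert_one_mem_support' w
      refine ⟨p.takeUntil _ hmem, ?_⟩
      intro hsn
      have hnodup := hpp.support_nodup
      rw [← Walk.take_spec p hmem, Walk.support_append, List.nodup_append] at hnodup
      have hdisj := hnodup.2.2
      have hsn_tail : s n ∈ (p.dropUntil _ hmem).support.tail := by
        have hend : s n ∈ (p.dropUntil _ hmem).support := Walk.end_mem_support _
        rw [Walk.support_eq_cons, List.mem_cons] at hend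
        rcases hend with h | h
        · exact absurd h.symm hx_ne
        · exact h
      exact hdisj _ hsn _ hsn_tail rfl
    have hxnot : s (n + 1) ∉ R (n + 1) := by
      rw [hR]
      rintro ⟨u, hu⟩
      exact hu (Walk.end_mem_support u)
    exact ⟨hsub, fun h => hxnot (h hxin)⟩
  refine ⟨key, ?_⟩
  by_contra hcon
  push_neg at hcon
  have hchain : ∀ n : ℕ, R (n + 1) ⊂ R n := fun n => key n (hcon n) (hcon (n + 1))
  have hcard : ∀ n : ℕ, (R (n + 1)).ncard < (R n).ncard :=
    fun n => Set.ncard_lt_ncard (hchain n) (Set.toFinite _)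
  have hbound : ∀ n : ℕ, (R n).ncard + n ≤ (R 0).ncard := by
    intro n
    induction n with
    | zero => simp
    | succ k ih =>
        have := hcard k
        omega
  have := hbound ((R 0).ncard + 1)
  omega
end

section
/- In a tree G, suppose a searcher starts at vertex s and a target at vertex t. In each round, the searcher moves along the unique path from its current vertex toward the target's current vertex by one edge, after which the target may move to any vertex of G not passing through the searcher's vertex (i.e., within its connected component of G minus the searcher's vertex). Then after at most |V(G)| rounds the searcher's vertex equals the target's vertex or the target's component has shrunk to a single vertex; in particular the searcher catches the target in finitely many rounds. -/
open SimpleGraph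


/-- In a finite tree `G`, a searcher `s` and a target `q` move in
rounds.  In each round the searcher moves one edge along the unique path from
its current vertex toward the target's current vertex (staying put if they
coincide), after which the target may move to any vertex reachable without
passing through the searcher's vertex (i.e. within its connected component of
`G` minus the searcher's vertex).  Then after at most `|V(G)|` rounds the
searcher's vertex equals the target's vertex: the searcher catches the target in
finitely many rounds. -/
theorem stmt_9 {V : Type*} [Fintype V] [DecidableEq V] (G : SimpleGraph V)
    (hG : G.IsTree) (s q : ℕ → V)
    (hsearch : ∀ n : ℕ, s n ≠ q n →
      ∃ w : G.Walk (s n) (q n), w.IsPath ∧ s (n + 1) = w.getVert 1)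
    (hstay : ∀ n : ℕ, s n = q n → s (n + 1) = s n)
    (htarget : ∀ n : ℕ, q (n + 1) = q n ∨
      ∃ w : G.Walk (q n) (q (n + 1)), s (n + 1) ∉ w.support) :
    ∃ n ≤ Fintype.card V, s n = q n := by
  by_contra hcon
  push_neg at hcon
  have huniq : ∀ ⦃a b : V⦄ (p p' : G.Path a b), p = p' :=
    isAcyclic_iff_path_unique.mp hG.2
  set C : ℕ → Set V := fun n => {v | ∃ w : G.Walk (q n) v, s n ∉ w.support} with hC
  have hqmem : ∀ n ≤ Fintype.card V, q n ∈ C n := by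
    intro n hn
    exact ⟨Walk.nil, by simpa using (hcon n hn)⟩
  have hsnot : ∀ n, s n ∉ C n := by
    rintro n ⟨w, hw⟩
    exact hw w.end_mem_support
  -- key step
  have hstep : ∀ n < Fintype.card V, C (n + 1) ⊂ C n := by
    intro n hn
    have hne : s n ≠ q n := hcon n hn.le
    obtain ⟨w, hwp, hs1⟩ := hsearch n hne
    have hnil : ¬ w.Nil := Walk.not_nil_of_ne hne
    have hwdec : Walk.cons (w.adj_snd hnil) w.tail = w := Walk.cons_tail_eq w hnil
    have hwp' : w.tail.IsPath ∧ s n ∉ w.tail.support := by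
      rw [← Walk.cons_isPath_iff (w.adj_snd hnil)]
      rwa [hwdec]
    have hbsup : w.getVert 1 ∈ w.support := by
      rw [← Walk.cons_support_tail (p := w) hnil]
      exact List.mem_cons_of_mem _ w.tail.start_mem_support
    -- every walk from q n to s n passes through w.getVert 1
    have hthrough : ∀ u : G.Walk (q n) (s n), w.getVert 1 ∈ u.support := by
      intro u
      have heq : (⟨w, hwp⟩ : G.Path (s n) (q n)) = u.reverse.toPath := huniq _ _
      have hb2 : w.getVert 1 ∈ (u.reverse.toPath : G.Walk (s n) (q n)).support := by
        rw [← heq]; exact hbsup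
      have := u.reverse.support_toPath_subset hb2
      rwa [Walk.support_reverse, List.mem_reverse] at this
    constructor
    · -- C (n+1) ⊆ C n
      rintro v ⟨u, hu⟩
      have : ∃ t : G.Walk (q n) v, s (n + 1) ∉ t.support := by
        rcases htarget n with heq | ⟨t0, ht0⟩
        · exact ⟨(u.copy heq rfl), by rwa [Walk.support_copy]⟩
        · refine ⟨t0.append u, ?_⟩
          rw [Walk.mem_support_append_iff]
          push_neg
          exact ⟨ht0, hu⟩
      obtain ⟨t, ht⟩ := this
      rw [hs1] at ht
      refine ⟨t, fun hsn => ?_⟩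
      have hbtu : w.getVert 1 ∈ (t.takeUntil (s n) hsn).support := hthrough _
      exact ht (t.support_takeUntil_subset hsn hbtu)
    · -- not C n ⊆ C (n+1)
      intro hsub
      have hmem : s (n + 1) ∈ C n := by
        rw [hs1]
        exact ⟨w.tail.reverse, by
          rw [Walk.support_reverse, List.mem_reverse]; exact hwp'.2⟩
      exact hsnot (n + 1) (hsub hmem)
  have hdec : ∀ k ≤ Fintype.card V, (C k).ncard + k ≤ (C 0).ncard := by
    intro k hk
    induction k with
    | zero => simp
    | succ m ih =>
      have hm := ih (Nat.le_of_succ_le hk)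
      have := Set.ncard_lt_ncard (hstep m hk) (Set.toFinite _)
      omega
  have h1 : 0 < (C (Fintype.card V)).ncard :=
    (Set.ncard_pos (Set.toFinite _)).mpr ⟨_, hqmem _ le_rfl⟩
  have h2 : (C 0).ncard < Fintype.card V := by
    have hss : C 0 ⊂ Set.univ := by
      rw [Set.ssubset_univ_iff]
      intro h
      exact hsnot 0 (h ▸ Set.mem_univ (s 0))
    have := Set.ncard_lt_ncard hss (Set.toFinite _)
    rwa [Set.ncard_univ, Nat.card_eq_fintype_card] at this
  have := hdec (Fintype.card V) le_rfl
  omega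
end

section
/- Let γ : S¹ → ℝ² be a simple closed curve and x₀ a parameter such that γ(x₀) lies on the convex hull of the image of γ, with a unique supporting line L at γ(x₀). If y ∈ S¹ is such that γ(x₀) lies on the line N normal to γ at γ(y) (γ assumed C¹ regular at y), then γ(x₀) is an extreme point of the finite set γ(S¹) ∩ N along N: it is either the first or last intersection point of N with γ in the direction of N. -/
/-- Let `γ : S¹ → ℝ²` be a simple closed curve (modeled as a
`1`-periodic continuous map, injective on a period) and `x₀` a parameter such
that `q = γ(x₀)` lies on the boundary of the convex hull of the image of `γ`
and admits a unique supporting line there (with outer normal `w`, unique up to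
positive scaling).  Suppose `γ` is differentiable at `y` with nonzero derivative
and `q` lies on the normal line `N` to `γ` at `γ(y)`, i.e. `q = γ(y) + t₀ u`
where `u` is a unit vector perpendicular to `γ'(y)`.  If `γ(S¹) ∩ N` is finite,
then `q` is an extreme point of `γ(S¹) ∩ N` along `N`: its parameter `t₀` is the
least or the greatest element of `{t | γ(y) + t u ∈ γ(S¹)}`. -/
theorem stmt_18 (γ : ℝ → EuclideanSpace ℝ (Fin 2)) (hγ : Continuous γ)
    (hper : Function.Periodic γ 1) (hsimple : Set.InjOn γ (Set.Ico 0 1))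
    (x₀ y : ℝ)
    (hq : γ x₀ ∈ frontier (convexHull ℝ (Set.range γ)))
    (w : EuclideanSpace ℝ (Fin 2)) (hw : w ≠ 0)
    (hsupp : ∀ z ∈ Set.range γ, (inner ℝ (z - γ x₀) w : ℝ) ≤ 0)
    (huniq : ∀ w' : EuclideanSpace ℝ (Fin 2), w' ≠ 0 →
      (∀ z ∈ Set.range γ, (inner ℝ (z - γ x₀) w' : ℝ) ≤ 0) → ∃ c : ℝ, 0 < c ∧ w' = c • w)
    (γ' : EuclideanSpace ℝ (Fin 2)) (hder : HasDerivAt γ γ' y) (hreg : γ' ≠ 0)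
    (u : EuclideanSpace ℝ (Fin 2)) (hu : ‖u‖ = 1) (huperp : (inner ℝ u γ' : ℝ) = 0)
    (t₀ : ℝ) (ht₀ : γ x₀ = γ y + t₀ • u)
    (hfin : {t : ℝ | γ y + t • u ∈ Set.range γ}.Finite) :
    IsLeast {t : ℝ | γ y + t • u ∈ Set.range γ} t₀ ∨
    IsGreatest {t : ℝ | γ y + t • u ∈ Set.range γ} t₀ := by
  have ht₀S : t₀ ∈ {t : ℝ | γ y + t • u ∈ Set.range γ} := by
    rw [Set.mem_setOf_eq, ← ht₀]; exact ⟨x₀, rfl⟩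
  have key : ∀ t ∈ {t : ℝ | γ y + t • u ∈ Set.range γ}, (t - t₀) * (inner ℝ u w : ℝ) ≤ 0 := by
    intro t ht
    have h0 := hsupp (γ y + t • u) ht
    have h1 : γ y + t • u - γ x₀ = (t - t₀) • u := by
      rw [ht₀]; module
    rwa [h1, real_inner_smul_left] at h0
  rcases lt_trichotomy ((inner ℝ u w : ℝ)) 0 with hlt | heq | hgt
  · left
    refine ⟨ht₀S, fun t ht => ?_⟩
    have := key t ht
    nlinarith
  · exfalso
    -- derivative argument: w ⊥ γ'
    have hderiv : HasDerivAt (fun s => (inner ℝ w (γ s - γ x₀) : ℝ)) ((inner ℝ w γ' : ℝ)) y := by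
      have h2 : HasDerivAt (fun s => γ s - γ x₀) γ' y := hder.sub_const _
      have := (innerSL ℝ w).hasFDerivAt.comp_hasDerivAt y h2
      exact this
    have hmax : IsLocalMax (fun s => (inner ℝ w (γ s - γ x₀) : ℝ)) y := by
      apply Filter.Eventually.of_forall
      intro s
      have h3 := hsupp (γ s) ⟨s, rfl⟩
      have h4 : (inner ℝ w (γ y - γ x₀) : ℝ) = 0 := by
        have : γ y - γ x₀ = (-t₀) • u := by rw [ht₀]; module
        rw [this, real_inner_smul_right, real_inner_comm, heq]; ring
      show (inner ℝ w (γ s - γ x₀) : ℝ) ≤ (inner ℝ w (γ y - γ x₀) : ℝ)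
      rw [h4, real_inner_comm]
      exact h3
    have hwγ' : (inner ℝ w γ' : ℝ) = 0 := hmax.hasDerivAt_eq_zero hderiv
    -- now w ⊥ u and w ⊥ γ', u,γ' span ℝ²
    have hli : LinearIndependent ℝ ![u, γ'] := by
      rw [LinearIndependent.pair_iff]
      intro s t hst
      have h5 : (inner ℝ u (s • u + t • γ') : ℝ) = 0 := by rw [hst, inner_zero_right]
      have h6 : (inner ℝ γ' (s • u + t • γ') : ℝ) = 0 := by rw [hst, inner_zero_right]
      rw [inner_add_right, real_inner_smul_right, real_inner_smul_right,
        real_inner_self_eq_norm_sq, hu, huperp] at h5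
      have hc : (inner ℝ γ' u : ℝ) = 0 := by rw [real_inner_comm]; exact huperp
      rw [inner_add_right, real_inner_smul_right, real_inner_smul_right,
        real_inner_self_eq_norm_sq, hc] at h6
      have hγn : ‖γ'‖ ≠ 0 := norm_ne_zero_iff.mpr hreg
      constructor
      · nlinarith
      · nlinarith [sq_pos_of_ne_zero hγn]
    have hspan : Submodule.span ℝ (Set.range ![u, γ']) = ⊤ := by
      apply Submodule.eq_top_of_finrank_eq
      rw [finrank_span_eq_card hli]
      simp [finrank_euclideanSpace]
    have hwmem : w ∈ (Submodule.span ℝ (Set.range ![u, γ']))ᗮ := by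
      rw [Submodule.mem_orthogonal]
      intro v hv
      induction hv using Submodule.span_induction with
      | mem v hv =>
        rcases hv with ⟨i, rfl⟩
        fin_cases i
        · simpa using heq
        · simpa [real_inner_comm, mul_comm] using hwγ'
      | zero => simp
      | add a b _ _ ha hb => rw [inner_add_left, ha, hb]; ring
      | smul c a _ ha => rw [real_inner_smul_left, ha]; ring
    rw [hspan, Submodule.top_orthogonal_eq_bot] at hwmem
    exact hw (Submodule.mem_bot ℝ |>.mp hwmem)
  · right
    refine ⟨ht₀S, fun t ht => ?_⟩
    have := key t ht
    nlinarith
end
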